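/- Under the constrained equal awards rule in a 2-minimal proportional generalized claims problem with claims c_1 ≤ … ≤ c_n (n ≥ 3), if α ≥ 2c_{n-1}/(c_{n-1} + c_n), then agent n weakly prefers pairing with agent 1 over pairing with any agent i ∉ {1, n}: CEA_n(c_{\{1,n\}}, α(c_1+c_n)) ≥ CEA_n(c_{\{i,n\}}, α(c_i+c_n)). -/

import Mathlib

/-!
Since `x ↦ 2x / (x + cₙ)` is increasing, the hypothesis on `α` gives `2 cᵢ ≤ α (cᵢ + cₙ)` for
every `i < n`: each coalition `{i, n}` can pay the smaller claim `cᵢ` in full, so agent `n` gets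
the residual `α (cᵢ + cₙ) - cᵢ = α cₙ - (1 - α) cᵢ`, which decreases in `cᵢ` because `α < 1`.
-/

/-- CEA payoff of the agent with claim `a` in the two-agent claims problem with
claims `a`, `b` and endowment `E` (with `0 ≤ E ≤ a + b`). -/
noncomputable def cea2 (a b E : ℝ) : ℝ :=
  if a ≤ b then min a (E / 2) else E - min b (E / 2)

theorem cea2_eq_sub_of_lt_of_two_mul_le {a b E : ℝ} (hba : b < a) (hE : 2 * b ≤ E) :
    cea2 a b E = E - b := by
  rw [cea2, if_neg hba.not_ge, min_eq_left (by linarith)]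

theorem two_mul_le_mul_add_of_le {α x p M : ℝ} (hM : 0 ≤ M) (hxM : 0 ≤ x + M) (hpM : 0 < p + M)
    (hxp : x ≤ p) (hp : 2 * p ≤ α * (p + M)) : 2 * x ≤ α * (x + M) := by
  have hcross : 2 * x * (p + M) ≤ 2 * p * (x + M) := by nlinarith
  have hscaled : 2 * p * (x + M) ≤ α * (x + M) * (p + M) := by nlinarith
  exact le_of_mul_le_mul_right (hcross.trans hscaled) hpM

theorem cea2_le_cea2_of_le {α x y M : ℝ} (hα : α ≤ 1) (hyx : y ≤ x) (hxM : x < M)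
    (hx : 2 * x ≤ α * (x + M)) (hy : 2 * y ≤ α * (y + M)) :
    cea2 M x (α * (x + M)) ≤ cea2 M y (α * (y + M)) := by
  rw [cea2_eq_sub_of_lt_of_two_mul_le hxM hx,
    cea2_eq_sub_of_lt_of_two_mul_le (hyx.trans_lt hxM) hy]
  nlinarith

/-- If `α ≥ 2c_{n-1}/(c_{n-1} + cₙ)`, then under CEA the highest-claim agent `n`
weakly prefers pairing with the lowest-claim agent `1` over pairing with any
agent `i ∉ {1, n}`. -/
theorem cea_top_prefers_bottom_when_alpha_large
    {n : ℕ} (hn : 3 ≤ n) (c : Fin n → ℝ) (hmono : Monotone c)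
    (hpos : ∀ i, 0 < c i) (α : ℝ) (hα1 : α < 1)
    (hα : 2 * c ⟨n - 2, by omega⟩ /
        (c ⟨n - 2, by omega⟩ + c ⟨n - 1, by omega⟩) ≤ α) :
    ∀ i : Fin n, 0 < i.val → i.val < n - 1 →
      cea2 (c ⟨n - 1, by omega⟩) (c ⟨0, by omega⟩)
          (α * (c ⟨0, by omega⟩ + c ⟨n - 1, by omega⟩)) ≥
        cea2 (c ⟨n - 1, by omega⟩) (c i)
          (α * (c i + c ⟨n - 1, by omega⟩)) := by
  intro i _ hin
  set M := c ⟨n - 1, by omega⟩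
  set p := c ⟨n - 2, by omega⟩
  have hM : 0 < M := hpos _
  have hpM : 0 < p + M := add_pos (hpos _) hM
  have hαp : 2 * p ≤ α * (p + M) := (div_le_iff₀ hpM).mp hα
  have hp_lt : p < M := by nlinarith
  have h1i : c ⟨0, by omega⟩ ≤ c i := hmono (Nat.zero_le i.val)
  have hip : c i ≤ p := hmono (show i.val ≤ n - 2 by omega)
  have hall : ∀ x, 0 < x → x ≤ p → 2 * x ≤ α * (x + M) := fun x hx hxp =>
    two_mul_le_mul_add_of_le hM.le (by linarith) hpM hxp hαp
  exact cea2_le_cea2_of_le hα1.le h1i (hip.trans_lt hp_lt)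
    (hall _ (hpos i) hip) (hall _ (hpos _) (h1i.trans hip))
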